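/- Let C₆ be the cycle graph on vertex set ZMod 6, where u is adjacent to v if and only if u − v = ±1. For every node map φ : ZMod 6 → A that is invariant under all automorphisms of C₆ (i.e. φ(σ(v)) = φ(v) for every automorphism σ and every vertex v) and every function g : A × A → B, the endpoint-factored link representation F(u,v) = g(φ(u), φ(v)) satisfies F(0,2) = F(0,3), even though the links (0,2) and (0,3) are not automorphic. Hence no endpoint-factored link representation built from an automorphism-invariant node map distinguishes all non-automorphic links. -/

import Mathlib

/-- The cycle graph on `ZMod 6`: `u` is adjacent to `v` iff `u - v = 1` or `u - v = -1`. -/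
def cycleSix : SimpleGraph (ZMod 6) where
  Adj u v := u - v = 1 ∨ u - v = -1
  symm := by
    constructor
    intro u v h
    rcases h with h | h
    · exact Or.inr (by rw [← neg_sub u v, h])
    · exact Or.inl (by rw [← neg_sub u v, h, neg_neg])
  loopless := by
    constructor
    intro u h
    rw [sub_self] at h
    revert h
    decide

/-- For every automorphism-invariant node map `φ` on `C₆` and every pairwise
function `g`, the endpoint-factored link representation `F(u,v) = g (φ u, φ v)` satisfies
`F (0,2) = F (0,3)`, although the links `(0,2)` and `(0,3)` are not automorphic. Hence no
endpoint-factored representation distinguishes all non-automorphic links. -/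
theorem cycleSix_endpoint_factored_fails {A B : Type*} (φ : ZMod 6 → A)
    (hφ : ∀ σ : cycleSix ≃g cycleSix, ∀ v : ZMod 6, φ (σ v) = φ v)
    (g : A × A → B) :
    g (φ 0, φ 2) = g (φ 0, φ 3) ∧
    ¬ ∃ σ : cycleSix ≃g cycleSix, ({σ 0, σ 2} : Set (ZMod 6)) = {0, 3} := by
  constructor
  · -- rotation automorphism
    have hrot : ∀ v : ZMod 6, φ (v + 1) = φ v := by
      intro v
      let ρ : cycleSix ≃g cycleSix :=
        { toEquiv := Equiv.addRight 1
          map_rel_iff' := by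
            intro a b
            show (a + 1 - (b + 1) = 1 ∨ a + 1 - (b + 1) = -1) ↔ (a - b = 1 ∨ a - b = -1)
            rw [add_sub_add_right_eq_sub] }
      exact hφ ρ v
    have h1 : φ (1 : ZMod 6) = φ 0 := by have := hrot 0; simpa using this
    have h2 : φ (2 : ZMod 6) = φ 1 := by have := hrot 1; norm_num at this; exact this
    have h3 : φ (3 : ZMod 6) = φ 2 := by have := hrot 2; norm_num at this; exact this
    rw [h3]
  · rintro ⟨σ, hσ⟩
    have h01 : cycleSix.Adj (σ 0) (σ 1) := σ.map_rel_iff.mpr (by right; decide)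
    have h21 : cycleSix.Adj (σ 2) (σ 1) := σ.map_rel_iff.mpr (by left; decide)
    have h0 : (σ 0 : ZMod 6) ∈ ({0, 3} : Set (ZMod 6)) := by
      rw [← hσ]; left; rfl
    have h2 : (σ 2 : ZMod 6) ∈ ({0, 3} : Set (ZMod 6)) := by
      rw [← hσ]; right; rfl
    have hne : σ 0 ≠ σ 2 := fun h => by
      have : (0 : ZMod 6) = 2 := σ.injective h
      exact absurd this (by decide)
    have key : ∀ x : ZMod 6, ¬ ((0 - x = 1 ∨ (0:ZMod 6) - x = -1) ∧ (3 - x = 1 ∨ (3:ZMod 6) - x = -1)) := by decide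
    rcases h0 with h0 | h0 <;> rcases h2 with h2 | h2
    · exact hne (h0.trans h2.symm)
    · exact key (σ 1) ⟨h0 ▸ h01, h2 ▸ h21⟩
    · exact key (σ 1) ⟨h2 ▸ h21, h0 ▸ h01⟩
    · exact hne (h0.trans h2.symm)
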